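/- arXiv:math/0703707 — 4 statements merged into one kernel-verified Lean document; each statement's English description precedes it below -/
import Mathlib

section
/- Let p be an odd prime, d ≥ 2 with d ∣ p−1, f = (p−1)/d. For a ∈ 𝔽_p^* with α ≡ ind_ω(a) mod d, and for all k ≥ 1: N(k,a) = (1/p) · [ f^k + Σ_{i=0}^{d−1} η_i^k · η_{i+α+θ} ], where the index i+α+θ is taken mod d. -/
open Finset

/-- The Gauss period `η_i = Σ_{u=0}^{f-1} ζ^{ω^{du+i}}`. -/
noncomputable def gaussPeriod (p d f : ℕ) (ω : (ZMod p)ˣ) (ζ : ℂ) (i : ℕ) : ℂ :=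
  ∑ u ∈ Finset.range f, ζ ^ (((ω : ZMod p) ^ (d * u + i)).val)

/-- The cyclotomic number `(i,j)` of order `d`. -/
noncomputable def cycNum (p d f : ℕ) (ω : (ZMod p)ˣ) (i j : ℕ) : ℕ :=
  Nat.card {uv : ℕ × ℕ // uv.1 < f ∧ uv.2 < f ∧
    (1 : ZMod p) + (ω : ZMod p) ^ (d * uv.1 + i) = (ω : ZMod p) ^ (d * uv.2 + j)}

/-- The cyclotomic integer `n(k,ν) = Σ_{i=0}^{d-1} η_i^k · η_{i+ν}`. -/
noncomputable def nInt (p d f : ℕ) (ω : (ZMod p)ˣ) (ζ : ℂ) (k ν : ℕ) : ℂ :=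
  ∑ i ∈ Finset.range d, (gaussPeriod p d f ω ζ i) ^ k * gaussPeriod p d f ω ζ (i + ν)

/-- `θ = 0` if `f` is even, `θ = d/2` if `f` is odd. -/
def theta (d f : ℕ) : ℕ := if Even f then 0 else d / 2

/-- `N(k,a)`: the number of `k`-tuples of nonzero `d`-th powers summing to `a`. -/
noncomputable def waringCount (p d k : ℕ) (a : ZMod p) : ℕ :=
  Nat.card {t : Fin k → ZMod p //
    (∀ i, ∃ b : (ZMod p)ˣ, ((b : ZMod p)) ^ d = t i) ∧ ∑ i, t i = a}

/-- `s_d(p,a)`: the least `k ≥ 1` such that `a` is a sum of `k` nonzero `d`-th powers. -/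
noncomputable def sWaring (p d : ℕ) (a : ZMod p) : ℕ :=
  sInf {k | 1 ≤ k ∧ ∃ u : Fin k → (ZMod p)ˣ, a = ∑ i, ((u i : ZMod p)) ^ d}

/-- `g_d(p) = max_{a ∈ 𝔽_p^*} s_d(p,a)`. -/
noncomputable def gWaring (p d : ℕ) : ℕ :=
  sSup {s | ∃ a : (ZMod p)ˣ, s = sWaring p d (a : ZMod p)}

/-- Product of a chain of cyclotomic numbers `(a,x₁)(x₁,x₂)⋯(xₘ,b)`. -/
noncomputable def chainProd (c : ℕ → ℕ → ℕ) (a b : ℕ) : List ℕ → ℕ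
  | [] => c a b
  | x :: xs => c a x * chainProd c x b xs

/-- Sum over all chains of `m` intermediate indices `0 ≤ i < d` of the products
`(a,i₂)(i₂,i₃)⋯(i_{m+1},b)` of consecutive cyclotomic numbers. -/
noncomputable def chainSum (d : ℕ) (c : ℕ → ℕ → ℕ) (a b m : ℕ) : ℕ :=
  ∑ v : Fin m → Fin d, chainProd c a b (List.ofFn fun i => ((v i : ℕ)))

/-! Let `ψ x = ζ ^ x.val` be the additive character of `ZMod p` and `C = {ω^(du) : u < f}` the
set of nonzero `d`-th powers. Orthogonality of `ψ` gives
`p · N(k,a) = ∑_t (∑_{c ∈ C} ψ(tc))^k · ψ(-ta)`. The term `t = 0` is `f^k`. For `t = ω^(du+i)` the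
inner sum is `η_i`; and since `-1 = ω^((p-1)/2)` with `(p-1)/2 ≡ θ (mod d)`, we have
`-a = ω^(α+θ+dN)`, so summing `ψ(-ta)` over `u` gives `η_(i+α+θ)`. -/

theorem sum_range_add_one_eq_of_eq {M : Type*} [AddCancelCommMonoid M] {h : ℕ → M} {f : ℕ}
    (hf : h f = h 0) : ∑ u ∈ range f, h (u + 1) = ∑ u ∈ range f, h u :=
  add_right_cancel (b := h 0) <| by rw [← sum_range_succ', sum_range_succ, hf]

theorem sum_range_mul_eq_sum_sum {M : Type*} [AddCommMonoid M] (d f : ℕ) (g : ℕ → M) :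
    ∑ m ∈ range (d * f), g m = ∑ u ∈ range f, ∑ i ∈ range d, g (d * u + i) := by
  induction f with
  | zero => simp
  | succ f ih => rw [Nat.mul_succ, sum_range_add, ih, sum_range_succ]

theorem exists_mul_div_two_eq_theta_add_mul (d f : ℕ) : ∃ M, d * f / 2 = theta d f + d * M := by
  rcases Nat.even_or_odd' f with ⟨g, rfl | rfl⟩
  · exact ⟨g, by simp [theta, Nat.mul_left_comm d 2, Nat.mul_div_cancel_left _ two_pos]⟩
  · refine ⟨g, ?_⟩
    simp only [theta, Nat.not_even_bit1, if_false]
    rw [Nat.mul_add, Nat.mul_left_comm, Nat.mul_one]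
    omega

theorem pow_eq_neg_one_of_orderOf_eq_two_mul {K : Type*} [CommRing K] [IsDomain K] {x : K}
    {n : ℕ} (hn : 0 < n) (h : orderOf x = 2 * n) : x ^ n = -1 :=
  ((IsPrimitiveRoot.orderOf x).pow (by omega) (h.trans (Nat.mul_comm 2 n))).eq_neg_one_of_two_right

theorem exists_neg_eq_pow_add_theta {K : Type*} [Ring K] {x a : K} {d f α : ℕ}
    (hx : x ^ (d * f / 2) = -1) (ha : ∃ m, a = x ^ (α + d * m)) :
    ∃ N, -a = x ^ (α + theta d f + d * N) := by
  obtain ⟨m, rfl⟩ := ha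
  obtain ⟨M, hM⟩ := exists_mul_div_two_eq_theta_add_mul d f
  refine ⟨m + M, ?_⟩
  rw [← neg_one_mul, ← hx, hM, ← pow_add]
  ring_nf

section Cyclic

theorem mem_zpowers_of_forall_pow_eq {G : Type*} [Group G] {ω : G}
    (hω : ∀ x : G, ∃ n : ℕ, ω ^ n = x) (x : G) : x ∈ Subgroup.zpowers ω := by
  obtain ⟨n, rfl⟩ := hω x
  exact Subgroup.npow_mem_zpowers ω n

variable {M : Type*} [Monoid M] [DecidableEq M]

def cycClass (d f : ℕ) (ω : M) : Finset M := (range f).image fun u => ω ^ (d * u)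

theorem sum_cycClass {A : Type*} [AddCommMonoid A] {d f : ℕ} {ω : M} (hd : 0 < d)
    (hdf : d * f ≤ orderOf ω) (F : M → A) :
    ∑ c ∈ cycClass d f ω, F c = ∑ u ∈ range f, F (ω ^ (d * u)) := by
  refine sum_image fun u hu v hv h => Nat.eq_of_mul_eq_mul_left hd ?_
  refine pow_injOn_Iio_orderOf ?_ ?_ h <;>
    simp only [coe_range, Set.mem_Iio] at hu hv ⊢ <;>
    nlinarith

theorem card_cycClass {d f : ℕ} {ω : M} (hd : 0 < d) (hdf : d * f ≤ orderOf ω) :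
    #(cycClass d f ω) = f := by
  rw [card_eq_sum_ones, sum_cycClass hd hdf, sum_const, card_range, smul_eq_mul, mul_one]

theorem mem_cycClass_iff [Finite M] {d f : ℕ} {ω : Mˣ} (hω : ∀ x : Mˣ, ∃ n : ℕ, ω ^ n = x)
    (horder : orderOf ω = d * f) {x : M} :
    x ∈ cycClass d f (ω : M) ↔ ∃ b : Mˣ, (b : M) ^ d = x := by
  have hf : 0 < f := Nat.pos_of_mul_pos_left (horder ▸ orderOf_pos ω)
  simp only [cycClass, mem_image, mem_range]
  constructor
  · rintro ⟨u, -, rfl⟩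
    exact ⟨ω ^ u, by rw [Units.val_pow_eq_pow_val, ← pow_mul, Nat.mul_comm]⟩
  · rintro ⟨b, rfl⟩
    obtain ⟨n, rfl⟩ := hω b
    refine ⟨n % f, Nat.mod_lt n hf, ?_⟩
    rw [← Nat.mul_mod_mul_left, ← horder, ← orderOf_units, pow_mod_orderOf,
      Units.val_pow_eq_pow_val, ← pow_mul, Nat.mul_comm]

end Cyclic

section FiniteField

variable {K : Type*} [Field K] [Fintype K] [DecidableEq K]

theorem sum_eq_add_sum_range_orderOf {A : Type*} [AddCommMonoid A] {ω : Kˣ}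
    (hω : ∀ x : Kˣ, ∃ n : ℕ, ω ^ n = x) (F : K → A) :
    ∑ x, F x = F 0 + ∑ m ∈ range (orderOf ω), F ((ω : K) ^ m) := by
  have hunits : univ.erase (0 : K) = univ.image ((↑) : Kˣ → K) := by
    ext x
    simp only [mem_erase, mem_univ, and_true, mem_image, true_and]
    exact isUnit_iff_ne_zero.symm
  rw [← add_sum_erase _ _ (mem_univ 0), hunits,
    ← IsCyclic.image_range_orderOf (mem_zpowers_of_forall_pow_eq hω), image_image, sum_image]
  · simp [Units.val_pow_eq_pow_val]
  · intro m hm n hn h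
    exact pow_injOn_Iio_orderOf (by simpa using hm) (by simpa using hn) (Units.ext h)

theorem sum_eq_add_sum_sum_pow {A : Type*} [AddCommMonoid A] {ω : Kˣ} {d f : ℕ}
    (hω : ∀ x : Kˣ, ∃ n : ℕ, ω ^ n = x) (horder : orderOf ω = d * f) (F : K → A) :
    ∑ x, F x = F 0 + ∑ i ∈ range d, ∑ u ∈ range f, F ((ω : K) ^ (d * u + i)) := by
  rw [sum_eq_add_sum_range_orderOf hω, horder, sum_range_mul_eq_sum_sum, sum_comm]

end FiniteField

theorem AddChar.map_sum_eq_prod {A M ι : Type*} [AddCommMonoid A] [CommMonoid M]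
    (ψ : AddChar A M) (s : Finset ι) (f : ι → A) : ψ (∑ i ∈ s, f i) = ∏ i ∈ s, ψ (f i) := by
  induction s using Finset.cons_induction with
  | empty => simp
  | cons i s hi ih => rw [sum_cons, prod_cons, ψ.map_add_eq_mul, ih]

section Character

variable {R R' : Type*} [CommRing R] [Fintype R] [DecidableEq R] [CommRing R'] [IsDomain R']
  {ψ : AddChar R R'}

theorem card_mul_card_filter_sum_eq_sum_pow_mul (hψ : ψ.IsPrimitive) (C : Finset R) (k : ℕ)
    (a : R) :
    (Fintype.card R : R') * #{x ∈ Fintype.piFinset fun _ : Fin k => C | ∑ i, x i = a}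
      = ∑ t, (∑ c ∈ C, ψ (t * c)) ^ k * ψ (-(t * a)) := by
  have hdelta : ∀ s : R, (if s = a then (Fintype.card R : R') else 0)
      = ∑ t, ψ (t * (s - a)) := fun s => by
    rw [AddChar.sum_mulShift _ hψ]
    simp [sub_eq_zero]
  have hexpand : ∀ (t : R) (x : Fin k → R),
      ψ (t * (∑ i, x i - a)) = (∏ i, ψ (t * x i)) * ψ (-(t * a)) := fun t x => by
    rw [mul_sub, sub_eq_add_neg, mul_sum, ψ.map_add_eq_mul, ψ.map_sum_eq_prod]
  rw [card_filter, Nat.cast_sum, mul_sum]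
  simp_rw [Nat.cast_ite, Nat.cast_one, Nat.cast_zero, mul_ite, mul_one, mul_zero, hdelta]
  rw [sum_comm]
  simp_rw [hexpand, ← sum_mul, sum_pow']

end Character

section GaussPeriod

variable {p d f : ℕ} {ω : (ZMod p)ˣ} {ζ : ℂ}

theorem gaussPeriod_add_self (hω : (ω : ZMod p) ^ (d * f) = 1) (j : ℕ) :
    gaussPeriod p d f ω ζ (j + d) = gaussPeriod p d f ω ζ j := by
  have hshift : ∀ u, d * u + (j + d) = d * (u + 1) + j := fun u => by ring
  simp only [gaussPeriod, hshift]
  exact sum_range_add_one_eq_of_eq (h := fun u => ζ ^ ((ω : ZMod p) ^ (d * u + j)).val)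
    (by simp [pow_add, hω])

theorem gaussPeriod_add_mul (hω : (ω : ZMod p) ^ (d * f) = 1) (j n : ℕ) :
    gaussPeriod p d f ω ζ (j + d * n) = gaussPeriod p d f ω ζ j := by
  induction n with
  | zero => simp
  | succ n ih => rw [Nat.mul_succ, ← add_assoc, gaussPeriod_add_self hω, ih]

theorem sum_cycClass_zmodChar_eq_gaussPeriod [NeZero p] (hζ : ζ ^ p = 1) (hd : 0 < d)
    (hdf : d * f ≤ orderOf (ω : ZMod p)) (m : ℕ) :
    ∑ c ∈ cycClass d f (ω : ZMod p), AddChar.zmodChar p hζ ((ω : ZMod p) ^ m * c)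
      = gaussPeriod p d f ω ζ m := by
  rw [sum_cycClass hd hdf]
  simp only [AddChar.zmodChar_apply, ← pow_add, add_comm m]
  rfl

theorem sum_range_sum_cycClass_pow_mul_eq [NeZero p] (hζ : ζ ^ p = 1) (hd : 0 < d)
    (horder : orderOf (ω : ZMod p) = d * f) {b : ZMod p} {β N : ℕ}
    (hb : -b = (ω : ZMod p) ^ (β + d * N)) (i k : ℕ) :
    ∑ u ∈ range f, (∑ c ∈ cycClass d f (ω : ZMod p),
        AddChar.zmodChar p hζ ((ω : ZMod p) ^ (d * u + i) * c)) ^ k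
          * AddChar.zmodChar p hζ (-((ω : ZMod p) ^ (d * u + i) * b))
      = gaussPeriod p d f ω ζ i ^ k * gaussPeriod p d f ω ζ (i + β) := by
  have hω : (ω : ZMod p) ^ (d * f) = 1 := horder ▸ pow_orderOf_eq_one _
  calc _ = ∑ u ∈ range f, gaussPeriod p d f ω ζ i ^ k
        * ζ ^ ((ω : ZMod p) ^ (d * u + (i + β + d * N))).val := sum_congr rfl fun u _ => by
        rw [sum_cycClass_zmodChar_eq_gaussPeriod hζ hd horder.ge, add_comm,
          gaussPeriod_add_mul hω, ← mul_neg, hb, ← pow_add, AddChar.zmodChar_apply]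
        ring_nf
    _ = _ := by
      rw [← mul_sum, ← gaussPeriod_add_mul hω (i + β) N]
      rfl

theorem waringCount_eq_card_filter [Fact p.Prime] (hω : ∀ x : (ZMod p)ˣ, ∃ n : ℕ, ω ^ n = x)
    (horder : orderOf ω = d * f) (k : ℕ) (a : ZMod p) :
    waringCount p d k a
      = #{x ∈ Fintype.piFinset fun _ : Fin k => cycClass d f (ω : ZMod p) | ∑ i, x i = a} := by
  rw [waringCount, Nat.card_eq_fintype_card, Fintype.card_subtype]
  congr 1
  ext x
  simp [Fintype.mem_piFinset, mem_cycClass_iff hω horder]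

end GaussPeriod

theorem waringCount_eq_gaussPeriods_general (p d f : ℕ) (hp : p.Prime) (hodd : Odd p)
    (hdvd : d ∣ p - 1) (hf : f = (p - 1) / d)
    (ω : (ZMod p)ˣ) (hω : ∀ x : (ZMod p)ˣ, ∃ n : ℕ, ω ^ n = x)
    (ζ : ℂ) (hζ : IsPrimitiveRoot ζ p)
    (a : (ZMod p)ˣ) (α : ℕ) (hα : ∃ m : ℕ, (a : ZMod p) = (ω : ZMod p) ^ (α + d * m))
    (k : ℕ) :
    (waringCount p d k (a : ZMod p) : ℂ)
      = (1 / p) * ((f : ℂ) ^ k + ∑ i ∈ Finset.range d,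
          (gaussPeriod p d f ω ζ i) ^ k * gaussPeriod p d f ω ζ (i + α + theta d f)) := by
  have := Fact.mk hp
  have hd : 0 < d := Nat.pos_of_dvd_of_pos hdvd (by have := hp.two_le; omega)
  have hdf : d * f = p - 1 := by rw [hf, Nat.mul_div_cancel' hdvd]
  have horder : orderOf ω = d * f := by
    rw [orderOf_eq_card_of_forall_mem_zpowers (mem_zpowers_of_forall_pow_eq hω),
      Nat.card_eq_fintype_card, ZMod.card_units, hdf]
  have horder' : orderOf (ω : ZMod p) = d * f := orderOf_units.trans horder
  have hneg1 : (ω : ZMod p) ^ (d * f / 2) = -1 := by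
    obtain ⟨c, hc⟩ := hodd
    exact pow_eq_neg_one_of_orderOf_eq_two_mul (by have := hp.two_le; omega) (by omega)
  obtain ⟨N, hN⟩ := exists_neg_eq_pow_add_theta hneg1 hα
  have hcount := card_mul_card_filter_sum_eq_sum_pow_mul
    (AddChar.zmodChar_primitive_of_primitive_root p hζ) (cycClass d f (ω : ZMod p)) k (a : ZMod p)
  rw [ZMod.card, sum_eq_add_sum_sum_pow hω horder] at hcount
  simp only [sum_range_sum_cycClass_pow_mul_eq _ hd horder' hN, zero_mul, neg_zero,
    AddChar.map_zero_eq_one, sum_const, card_cycClass hd horder'.ge, nsmul_eq_mul, mul_one,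
    ← waringCount_eq_card_filter hω horder, ← add_assoc] at hcount
  rw [one_div, inv_mul_eq_div, eq_div_iff (by exact_mod_cast hp.ne_zero), mul_comm, hcount]

/-- `N(k,a) = (1/p)·[f^k + Σ_{i=0}^{d-1} η_i^k · η_{i+α+θ}]`. -/
theorem waringCount_eq_gaussPeriods (p d f : ℕ) (hp : p.Prime) (hodd : Odd p)
    (hd : 2 ≤ d) (hdvd : d ∣ p - 1) (hf : f = (p - 1) / d)
    (ω : (ZMod p)ˣ) (hω : ∀ x : (ZMod p)ˣ, ∃ n : ℕ, ω ^ n = x)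
    (ζ : ℂ) (hζ : IsPrimitiveRoot ζ p)
    (a : (ZMod p)ˣ) (α : ℕ) (hα : ∃ m : ℕ, (a : ZMod p) = (ω : ZMod p) ^ (α + d * m))
    (k : ℕ) (hk : 1 ≤ k) :
    (waringCount p d k (a : ZMod p) : ℂ)
      = (1 / p) * ((f : ℂ) ^ k + ∑ i ∈ Finset.range d,
          (gaussPeriod p d f ω ζ i) ^ k * gaussPeriod p d f ω ζ (i + α + theta d f)) :=
  waringCount_eq_gaussPeriods_general p d f hp hodd hdvd hf ω hω ζ hζ a α hα k
end

section
/- Let p be an odd prime, d ≥ 2 with d ∣ p−1, f = (p−1)/d. For all 0 ≤ k,l ≤ d−1: η_l · η_{l+k} = Σ_{h=0}^{d−1} (k,h) · η_{l+h} + f·δ_{θk}, where δ_{θk} is Kronecker's delta and all period indices are taken mod d. -/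
open Finset

/-! Write `ψ x = ζ ^ x.val`, an additive character of `ZMod p`. Shifting the summation index of
`η_{l+k}` by `u` gives `η_l η_{l+k} = ∑_{w,u} ψ(ω^{du+l} (1 + ω^{dw+k}))`. For fixed `w` the
inner sum over `u` is `f` if `1 + ω^{dw+k} = 0`, and `η_{l+h}` if `1 + ω^{dw+k} = ω^{dv+h}`;
counting the `w` of each kind yields the cyclotomic numbers `(k,h)`. Finally
`1 + ω^{dw+k} = 0` means `dw + k = (p-1)/2`, which has a solution `w < f` iff `k = θ`. -/

open Finset

theorem Function.Periodic.sum_range_add {M : Type*} [AddCancelCommMonoid M] {g : ℕ → M}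
    {n : ℕ} (hg : Function.Periodic g n) (v : ℕ) :
    ∑ u ∈ range n, g (u + v) = ∑ u ∈ range n, g u := by
  induction v with
  | zero => rfl
  | succ v ih =>
    have h := (sum_range_succ' (fun u => g (u + v)) n).symm.trans (sum_range_succ _ n)
    rw [zero_add, add_comm n v, hg v] at h
    rw [← ih, ← add_right_cancel h]
    exact sum_congr rfl fun u _ => by rw [add_right_comm u 1 v, add_assoc]

theorem ZMod.pow_val_add {M : Type*} [CommMonoid M] {n : ℕ} [NeZero n] {ζ : M}
    (hζ : ζ ^ n = 1) (a b : ZMod n) : ζ ^ (a + b).val = ζ ^ a.val * ζ ^ b.val :=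
  (AddChar.zmodChar n hζ).map_add_eq_mul a b

theorem Nat.mul_add_lt_mul {d f v h : ℕ} (hv : v < f) (hh : h < d) : d * v + h < d * f :=
  mul_comm f d ▸ Nat.mul_add_lt_mul_of_lt_of_lt hv hh

theorem Nat.mul_add_eq_mul_add_iff {d v h v' h' : ℕ} (hh : h < d) (hh' : h' < d) :
    d * v + h = d * v' + h' ↔ v = v' ∧ h = h' := by
  have hd : 0 < d := by omega
  refine ⟨fun he => ?_, by rintro ⟨rfl, rfl⟩; rfl⟩
  have := (Nat.div_mod_unique hd).mpr ⟨by rw [add_comm, he], hh⟩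
  rw [Nat.mul_add_div hd, Nat.div_eq_of_lt hh', Nat.mul_add_mod, Nat.mod_eq_of_lt hh'] at this
  omega

namespace IsPrimitiveRoot

variable {d f : ℕ}

theorem pow_mul_add_eq_pow_mul_add_iff {M : Type*} [CommMonoid M] {g : M}
    (hg : IsPrimitiveRoot g (d * f)) {v h v' h' : ℕ} (hv : v < f) (hh : h < d) (hv' : v' < f)
    (hh' : h' < d) : g ^ (d * v + h) = g ^ (d * v' + h') ↔ v = v' ∧ h = h' := by
  rw [← Nat.mul_add_eq_mul_add_iff hh hh']
  exact ⟨hg.pow_inj (Nat.mul_add_lt_mul hv hh) (Nat.mul_add_lt_mul hv' hh'),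
    fun he => he ▸ rfl⟩

variable {R : Type*} [CommRing R] [NoZeroDivisors R] {g : R}

theorem pow_div_two_eq_neg_one {n : ℕ} (hg : IsPrimitiveRoot g n) (hn : Even n) (hn0 : n ≠ 0) :
    g ^ (n / 2) = -1 := by
  refine eq_neg_one_of_two_right ?_
  have := hg.pow_of_dvd (by rcases hn with ⟨m, rfl⟩; omega) (Nat.div_dvd_of_dvd hn.two_dvd)
  rwa [Nat.div_div_self hn.two_dvd hn0] at this

theorem one_add_pow_eq_zero_iff (hg : IsPrimitiveRoot g (d * f)) (h : Even (d * f)) {w k : ℕ}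
    (hw : w < f) (hk : k < d) : 1 + g ^ (d * w + k) = 0 ↔ d * w + k = d * f / 2 := by
  have hpos : 0 < d * f := Nat.zero_lt_of_lt (Nat.mul_add_lt_mul hw hk)
  rw [← neg_eq_iff_add_eq_zero, ← hg.pow_div_two_eq_neg_one h hpos.ne', eq_comm]
  exact ⟨hg.pow_inj (Nat.mul_add_lt_mul hw hk) (Nat.div_lt_self hpos one_lt_two),
    fun he => he ▸ rfl⟩

end IsPrimitiveRoot

theorem theta_eq_mul_div_two_mod {d f : ℕ} (h : Even (d * f)) : theta d f = d * f / 2 % d := by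
  unfold theta
  split_ifs with hf
  · obtain ⟨t, rfl⟩ := hf
    rw [← two_mul, mul_left_comm, Nat.mul_div_cancel_left _ two_pos, Nat.mul_mod_right]
  · obtain ⟨e, rfl⟩ := (Nat.even_mul.mp h).resolve_right hf
    obtain ⟨t, rfl⟩ := Nat.not_even_iff_odd.mp hf
    have : (e + e) * (2 * t + 1) / 2 = (e + e) * t + e := by
      rw [← two_mul, mul_assoc, Nat.mul_div_cancel_left _ two_pos]
      ring
    rw [this, Nat.mul_add_mod, ← two_mul, Nat.mul_div_cancel_left _ two_pos]
    rcases e.eq_zero_or_pos with rfl | he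
    · rfl
    · exact (Nat.mod_eq_of_lt (by omega)).symm

theorem card_filter_mul_add_eq_mul_div_two {d f k : ℕ} (hk : k < d) (hf : 0 < f)
    (h : Even (d * f)) :
    #{w ∈ range f | d * w + k = d * f / 2} = if theta d f = k then 1 else 0 := by
  have hd : 0 < d := by omega
  have hiff : ∀ w, d * w + k = d * f / 2 ↔ d * f / 2 / d = w ∧ theta d f = k := fun w => by
    rw [theta_eq_mul_div_two_mod h, Nat.div_mod_unique hd]
    omega
  split_ifs with hk'
  · have hlt : d * f / 2 / d < f :=
      Nat.div_lt_of_lt_mul (Nat.div_lt_self (by positivity) one_lt_two)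
    simp [hiff, hk', filter_eq, hlt]
  · simp [hiff, hk']

section GaussPeriod

variable {p d f : ℕ} {ω : (ZMod p)ˣ} {ζ : ℂ}

theorem gaussPeriod_eq_sum_range_add (hω : (ω : ZMod p) ^ (d * f) = 1) (i v : ℕ) :
    gaussPeriod p d f ω ζ i =
      ∑ u ∈ range f, ζ ^ ((ω : ZMod p) ^ (d * (u + v) + i)).val := by
  refine (Function.Periodic.sum_range_add
    (g := fun u => ζ ^ ((ω : ZMod p) ^ (d * u + i)).val) (fun u => ?_) v).symm
  simp only [mul_add, add_right_comm _ (d * f), pow_add, hω, mul_one]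

theorem sum_range_pow_val_pow_mul_pow (hω : (ω : ZMod p) ^ (d * f) = 1) (i v h : ℕ) :
    ∑ u ∈ range f, ζ ^ ((ω : ZMod p) ^ (d * u + i) * (ω : ZMod p) ^ (d * v + h)).val =
      gaussPeriod p d f ω ζ (i + h) := by
  rw [gaussPeriod_eq_sum_range_add hω (i + h) v]
  refine sum_congr rfl fun u _ => ?_
  rw [← pow_add]
  ring_nf

theorem gaussPeriod_mul_gaussPeriod_eq_sum [NeZero p] (hζ : ζ ^ p = 1)
    (hω : (ω : ZMod p) ^ (d * f) = 1) (i j : ℕ) :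
    gaussPeriod p d f ω ζ i * gaussPeriod p d f ω ζ (i + j) =
      ∑ w ∈ range f, ∑ u ∈ range f,
        ζ ^ ((ω : ZMod p) ^ (d * u + i) * (1 + (ω : ZMod p) ^ (d * w + j))).val := by
  rw [sum_comm, gaussPeriod, sum_mul]
  refine sum_congr rfl fun u _ => ?_
  rw [gaussPeriod_eq_sum_range_add hω (i + j) u, mul_sum]
  refine sum_congr rfl fun w _ => ?_
  rw [← ZMod.pow_val_add hζ, mul_one_add, ← pow_add]
  ring_nf

-- Each nonzero `x` has exactly one representation `ω ^ (d * v + h)` with `v < f`, `h < d`.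
theorem sum_range_pow_val_pow_mul [Fact p.Prime] (hω : IsPrimitiveRoot (ω : ZMod p) (d * f))
    (hdf : d * f = p - 1) (i : ℕ) (x : ZMod p) :
    ∑ u ∈ range f, ζ ^ ((ω : ZMod p) ^ (d * u + i) * x).val =
      (if x = 0 then (f : ℂ) else 0) + ∑ h ∈ range d, ∑ v ∈ range f,
        if x = (ω : ZMod p) ^ (d * v + h) then gaussPeriod p d f ω ζ (i + h) else 0 := by
  by_cases hx : x = 0
  · simp [hx, fun n => (pow_ne_zero n ω.ne_zero).symm]
  have : NeZero (d * f) := ⟨hdf ▸ (Nat.sub_pos_of_lt (Fact.out : p.Prime).one_lt).ne'⟩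
  obtain ⟨n, hn, rfl⟩ := hω.eq_pow_of_pow_eq_one (hdf ▸ ZMod.pow_card_sub_one_eq_one hx)
  have hd : 0 < d := Nat.pos_of_mul_pos_right (Nat.zero_lt_of_lt hn)
  obtain ⟨v₀, hv₀, h₀, hh₀, rfl⟩ : ∃ v < f, ∃ h < d, d * v + h = n :=
    ⟨n / d, Nat.div_lt_of_lt_mul hn, n % d, Nat.mod_lt n hd, Nat.div_add_mod n d⟩
  rw [if_neg hx, zero_add, sum_range_pow_val_pow_mul_pow hω.pow_eq_one]
  have hrep : ∀ h ∈ range d, ∀ v ∈ range f,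
      (ω : ZMod p) ^ (d * v₀ + h₀) = (ω : ZMod p) ^ (d * v + h) ↔ h₀ = h ∧ v₀ = v :=
    fun h hh v hv => by
      rw [hω.pow_mul_add_eq_pow_mul_add_iff hv₀ hh₀ (mem_range.1 hv) (mem_range.1 hh),
        and_comm]
  rw [sum_congr rfl fun h hh => sum_congr rfl fun v hv => if_congr (hrep h hh v hv) rfl rfl]
  simp [ite_and, hv₀, hh₀]

theorem cycNum_eq_card_filter (i j : ℕ) :
    cycNum p d f ω i j = #{uv ∈ range f ×ˢ range f |
      1 + (ω : ZMod p) ^ (d * uv.1 + i) = (ω : ZMod p) ^ (d * uv.2 + j)} := by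
  rw [cycNum, ← Nat.card_eq_finsetCard]
  exact Nat.card_congr (Equiv.subtypeEquivRight fun uv => by simp [and_assoc])

theorem sum_sum_sum_ite_eq_sum_cycNum_mul (k : ℕ) (a : ℕ → ℂ) :
    ∑ w ∈ range f, ∑ h ∈ range d, ∑ v ∈ range f,
        (if 1 + (ω : ZMod p) ^ (d * w + k) = (ω : ZMod p) ^ (d * v + h) then a h else 0) =
      ∑ h ∈ range d, (cycNum p d f ω k h : ℂ) * a h := by
  rw [sum_comm]
  refine sum_congr rfl fun h _ => ?_
  rw [← sum_product', ← sum_filter, sum_const, nsmul_eq_mul, cycNum_eq_card_filter]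

theorem card_filter_one_add_pow_eq_zero [Fact p.Prime]
    (hω : IsPrimitiveRoot (ω : ZMod p) (d * f)) (h : Even (d * f)) (hf : 0 < f) {k : ℕ}
    (hk : k < d) :
    #{w ∈ range f | 1 + (ω : ZMod p) ^ (d * w + k) = 0} = if theta d f = k then 1 else 0 := by
  rw [← card_filter_mul_add_eq_mul_div_two hk hf h]
  exact congrArg card (filter_congr fun w hw => hω.one_add_pow_eq_zero_iff h (mem_range.1 hw) hk)

end GaussPeriod

theorem gaussPeriod_mul_gaussPeriod_general (p d f : ℕ) (hp : p.Prime) (hodd : Odd p)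
    (hdvd : d ∣ p - 1) (hf : f = (p - 1) / d)
    (ω : (ZMod p)ˣ) (hω : ∀ x : (ZMod p)ˣ, ∃ n : ℕ, ω ^ n = x)
    (ζ : ℂ) (hζ : IsPrimitiveRoot ζ p)
    (k l : ℕ) (hk : k < d) :
    gaussPeriod p d f ω ζ l * gaussPeriod p d f ω ζ (l + k)
      = ∑ h ∈ Finset.range d, (cycNum p d f ω k h : ℂ) * gaussPeriod p d f ω ζ (l + h)
        + (f : ℂ) * (if theta d f = k then 1 else 0) := by
  have := Fact.mk hp
  have hdf : d * f = p - 1 := by rw [hf, Nat.mul_div_cancel' hdvd]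
  have hf0 : 0 < f := Nat.pos_of_mul_pos_left (hdf ▸ Nat.sub_pos_of_lt hp.one_lt)
  have hprim : IsPrimitiveRoot (ω : ZMod p) (d * f) := by
    rw [hdf, ← ZMod.card_units p, ← Nat.card_eq_fintype_card,
      ← orderOf_eq_card_of_forall_mem_powers fun x => (Submonoid.mem_powers_iff x ω).2 (hω x)]
    exact IsPrimitiveRoot.coe_units_iff.2 (.orderOf ω)
  have hθ := card_filter_one_add_pow_eq_zero hprim (hdf ▸ Nat.Odd.sub_odd hodd odd_one) hf0 hk
  rw [gaussPeriod_mul_gaussPeriod_eq_sum hζ.pow_eq_one hprim.pow_eq_one]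
  simp only [sum_range_pow_val_pow_mul hprim hdf, sum_add_distrib,
    sum_sum_sum_ite_eq_sum_cycNum_mul]
  rw [← sum_filter, sum_const, hθ, add_comm]
  split_ifs <;> simp

/-- `η_l·η_{l+k} = Σ_{h=0}^{d-1} (k,h)·η_{l+h} + f·δ_{θk}`. -/
theorem gaussPeriod_mul_gaussPeriod (p d f : ℕ) (hp : p.Prime) (hodd : Odd p)
    (hd : 2 ≤ d) (hdvd : d ∣ p - 1) (hf : f = (p - 1) / d)
    (ω : (ZMod p)ˣ) (hω : ∀ x : (ZMod p)ˣ, ∃ n : ℕ, ω ^ n = x)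
    (ζ : ℂ) (hζ : IsPrimitiveRoot ζ p)
    (k l : ℕ) (hk : k < d) (hl : l < d) :
    gaussPeriod p d f ω ζ l * gaussPeriod p d f ω ζ (l + k)
      = ∑ h ∈ Finset.range d, (cycNum p d f ω k h : ℂ) * gaussPeriod p d f ω ζ (l + h)
        + (f : ℂ) * (if theta d f = k then 1 else 0) :=
  gaussPeriod_mul_gaussPeriod_general p d f hp hodd hdvd hf ω hω ζ hζ k l hk
end

section
/- (Lemma 2, case k = 4) Let p be an odd prime, d ≥ 2 with d ∣ p−1, f = (p−1)/d. For every 0 ≤ ν ≤ d−1: n(4,ν) + f⁴ = p · Σ_{i,j=0}^{d−1} (ν,i)(i,j)(j,θ) + f·δ_{θ0}·[n(2,ν) + f²] + f·(0,θ)·[n(1,ν) + f]. -/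
open Finset

/-! Let `H = C₀` be the group of nonzero `d`-th powers, `C_j = ω^j H` the cyclotomic classes,
and `A_k(x)` the number of `(t₁, …, t_k) ∈ Hᵏ` with `x + t₁ + ⋯ + t_k = 0`.

Orthogonality of the additive character `ψ(a) = ζ^a` gives
`p · A_k(x) = Σ_y (Σ_{t ∈ H} ψ(y t))^k ψ(y x)`. The term `y = 0` is `f^k`, and on the class
`C_i` the inner sum is the Gauss period `η_i`; with `x = ω^ν` this is
`n(k,ν) + f^k = p · A_k(ω^ν)`.

On the counting side, `A_k` is invariant under multiplication by `H`, so substituting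
`t ↦ t⁻¹` gives `A_{k+1}(ω^i) = Σ_{y ∈ C_i} A_k(1 + y)`. Sorting `1 + y` by its class, and
using `-1 ∈ C_θ`, gives `A_{k+1}(ω^i) = δ_{iθ} A_k(0) + Σ_j (i,j) A_k(ω^j)`, while
`A_{k+1}(0) = f · A_k(1)`. Unwinding this recursion from `A_4` down to `A_0` expresses
`A_4(ω^ν)` through `A_2(ω^ν)`, `A_1(ω^ν)` and the cyclotomic numbers. -/

/-- `zeroSumCount H k x` counts the tuples `(t₁, …, t_k) ∈ Hᵏ` with `x + t₁ + ⋯ + t_k = 0`. -/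
def zeroSumCount {R : Type*} [AddMonoid R] [DecidableEq R] (H : Finset R) : ℕ → R → ℕ
  | 0, x => if x = 0 then 1 else 0
  | k + 1, x => ∑ t ∈ H, zeroSumCount H k (x + t)

theorem card_mul_zeroSumCount {R R' : Type*} [CommRing R] [Fintype R] [DecidableEq R]
    [CommRing R'] [IsDomain R'] {ψ : AddChar R R'} (hψ : ψ.IsPrimitive)
    (H : Finset R) (k : ℕ) (x : R) :
    (Fintype.card R : R') * zeroSumCount H k x
      = ∑ y, (∑ t ∈ H, ψ (y * t)) ^ k * ψ (y * x) := by
  induction k generalizing x with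
  | zero =>
    simp only [zeroSumCount, pow_zero, one_mul, AddChar.sum_mulShift x hψ]
    split_ifs <;> simp
  | succ k ih =>
    calc (Fintype.card R : R') * zeroSumCount H (k + 1) x
        = ∑ t ∈ H, ∑ y, (∑ s ∈ H, ψ (y * s)) ^ k * ψ (y * (x + t)) := by
          simp only [zeroSumCount, Nat.cast_sum, mul_sum, ih]
      _ = ∑ y, (∑ s ∈ H, ψ (y * s)) ^ (k + 1) * ψ (y * x) := by
          rw [sum_comm]
          refine sum_congr rfl fun y _ => ?_
          simp only [mul_add, AddChar.map_add_eq_mul, ← mul_sum]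
          ring

theorem Units.val_pow_eq_val_pow_iff_modEq {M : Type*} [Monoid M] (u : Mˣ) {m n : ℕ} :
    (u : M) ^ m = (u : M) ^ n ↔ m ≡ n [MOD orderOf u] := by
  rw [← Units.val_pow_eq_pow_val, ← Units.val_pow_eq_pow_val, Units.val_inj,
    pow_eq_pow_iff_modEq]

theorem theta_lt {d : ℕ} (f : ℕ) (hd : 0 < d) : theta d f < d := by
  unfold theta
  split_ifs <;> omega

def cyclotomicClass (p d f : ℕ) (ω : (ZMod p)ˣ) (j : ℕ) : Finset (ZMod p) :=
  (range f).image fun u => (ω : ZMod p) ^ (d * u + j)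

namespace cyclotomicClass

variable {p d f : ℕ} {ω : (ZMod p)ˣ}

theorem mem_iff (hω : orderOf ω = d * f) {j : ℕ} {y : ZMod p} :
    y ∈ cyclotomicClass p d f ω j ↔ ∃ n, (ω : ZMod p) ^ (d * n + j) = y := by
  refine ⟨fun hy => ?_, fun ⟨n, hn⟩ => ?_⟩
  · obtain ⟨u, -, rfl⟩ := mem_image.1 hy
    exact ⟨u, rfl⟩
  · have hf : 0 < f := Nat.pos_of_mul_pos_left (hω ▸ orderOf_pos ω)
    refine mem_image.2 ⟨n % f, mem_range.2 (Nat.mod_lt n hf), hn ▸ ?_⟩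
    exact (hω ▸ Units.val_pow_eq_val_pow_iff_modEq ω).2
      (((Nat.mod_modEq n f).mul_left' d).add_right j)

theorem injOn_pow (hω : orderOf ω = d * f) (j : ℕ) :
    Set.InjOn (fun u => (ω : ZMod p) ^ (d * u + j)) (range f) := by
  intro u hu v hv huv
  have hd : d ≠ 0 := (Nat.pos_of_mul_pos_right (hω ▸ orderOf_pos ω)).ne'
  have := ((hω ▸ Units.val_pow_eq_val_pow_iff_modEq ω).1 huv).add_right_cancel' j
  exact (this.mul_left_cancel' hd).eq_of_lt_of_lt (mem_range.1 hu) (mem_range.1 hv)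

theorem sum_eq {M : Type*} [AddCommMonoid M] (hω : orderOf ω = d * f) (j : ℕ)
    (g : ZMod p → M) :
    ∑ y ∈ cyclotomicClass p d f ω j, g y = ∑ u ∈ range f, g ((ω : ZMod p) ^ (d * u + j)) :=
  sum_image (injOn_pow hω j)

theorem card_eq (hω : orderOf ω = d * f) (j : ℕ) : #(cyclotomicClass p d f ω j) = f := by
  rw [cyclotomicClass, card_image_of_injOn (injOn_pow hω j), card_range]

theorem ne_zero [Fact p.Prime] {j : ℕ} {y : ZMod p} (hy : y ∈ cyclotomicClass p d f ω j) :
    y ≠ 0 := by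
  obtain ⟨u, -, rfl⟩ := mem_image.1 hy
  exact pow_ne_zero _ ω.ne_zero

theorem mul_mem (hω : orderOf ω = d * f) {j : ℕ} {a y : ZMod p}
    (hy : y ∈ cyclotomicClass p d f ω j) (ha : a ∈ cyclotomicClass p d f ω 0) :
    y * a ∈ cyclotomicClass p d f ω j := by
  obtain ⟨m, rfl⟩ := (mem_iff hω).1 hy
  obtain ⟨n, rfl⟩ := (mem_iff hω).1 ha
  exact (mem_iff hω).2 ⟨m + n, by ring⟩

theorem inv_mem [Fact p.Prime] (hω : orderOf ω = d * f) {a : ZMod p}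
    (ha : a ∈ cyclotomicClass p d f ω 0) : a⁻¹ ∈ cyclotomicClass p d f ω 0 := by
  obtain ⟨n, rfl⟩ := (mem_iff hω).1 ha
  obtain ⟨f', rfl⟩ : ∃ f', f = f' + 1 :=
    Nat.exists_eq_add_one.2 (Nat.pos_of_mul_pos_left (hω ▸ orderOf_pos ω))
  refine (mem_iff hω).2 ⟨n * f', (inv_eq_of_mul_eq_one_right ?_).symm⟩
  have h1 : (ω : ZMod p) ^ (d * (f' + 1)) = 1 := by
    rw [← hω, ← Units.val_pow_eq_pow_val, pow_orderOf_eq_one, Units.val_one]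
  rw [← pow_add, show d * n + 0 + (d * (n * f') + 0) = d * (f' + 1) * n by ring, pow_mul, h1,
    one_pow]

theorem exists_eq_pow_mul (hω : orderOf ω = d * f) {j : ℕ} {y : ZMod p}
    (hy : y ∈ cyclotomicClass p d f ω j) :
    ∃ a ∈ cyclotomicClass p d f ω 0, y = (ω : ZMod p) ^ j * a := by
  obtain ⟨n, rfl⟩ := (mem_iff hω).1 hy
  exact ⟨_, (mem_iff hω).2 ⟨n, rfl⟩, by ring⟩

theorem sum_mul [Fact p.Prime] {M : Type*} [AddCommMonoid M] (hω : orderOf ω = d * f)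
    {j : ℕ} {a : ZMod p} (ha : a ∈ cyclotomicClass p d f ω 0) (g : ZMod p → M) :
    ∑ y ∈ cyclotomicClass p d f ω j, g (y * a) = ∑ y ∈ cyclotomicClass p d f ω j, g y := by
  have ha0 := ne_zero ha
  refine sum_nbij' (· * a) (· * a⁻¹) (fun y hy => mul_mem hω hy ha)
    (fun y hy => mul_mem hω hy (inv_mem hω ha)) (fun y _ => ?_) (fun y _ => ?_) fun _ _ => rfl
  all_goals simp [ha0]

theorem sum_inv [Fact p.Prime] {M : Type*} [AddCommMonoid M] (hω : orderOf ω = d * f)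
    (g : ZMod p → M) :
    ∑ t ∈ cyclotomicClass p d f ω 0, g t⁻¹ = ∑ t ∈ cyclotomicClass p d f ω 0, g t :=
  sum_nbij' (·⁻¹) (·⁻¹) (fun _ ht => inv_mem hω ht) (fun _ ht => inv_mem hω ht)
    (fun t _ => inv_inv t) (fun t _ => inv_inv t) fun _ _ => rfl

theorem sum_pow_mul {M : Type*} [AddCommMonoid M] (hω : orderOf ω = d * f) (i : ℕ)
    (g : ZMod p → M) :
    ∑ t ∈ cyclotomicClass p d f ω 0, g ((ω : ZMod p) ^ i * t)
      = ∑ y ∈ cyclotomicClass p d f ω i, g y := by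
  simp only [sum_eq hω, ← pow_add, add_zero, add_comm i]

theorem eq_of_mem_of_mem (hω : orderOf ω = d * f) {i j : ℕ} (hi : i < d) (hj : j < d)
    {y : ZMod p} (hyi : y ∈ cyclotomicClass p d f ω i) (hyj : y ∈ cyclotomicClass p d f ω j) :
    i = j := by
  obtain ⟨m, rfl⟩ := (mem_iff hω).1 hyi
  obtain ⟨n, hn⟩ := (mem_iff hω).1 hyj
  have := ((hω ▸ Units.val_pow_eq_val_pow_iff_modEq ω).1 hn.symm).of_mul_right f
  simpa [Nat.ModEq, Nat.add_mod, Nat.mod_eq_of_lt hi, Nat.mod_eq_of_lt hj] using this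

theorem exists_mem [Fact p.Prime] (hω : orderOf ω = d * f) (hdf : d * f = p - 1)
    {y : ZMod p} (hy : y ≠ 0) : ∃ j < d, y ∈ cyclotomicClass p d f ω j := by
  have hd : 0 < d := Nat.pos_of_mul_pos_right (hω ▸ orderOf_pos ω)
  have hprim : IsPrimitiveRoot (ω : ZMod p) (p - 1) :=
    IsPrimitiveRoot.coe_units_iff.2 (hω.trans hdf ▸ IsPrimitiveRoot.orderOf ω)
  have : NeZero (p - 1) := ⟨hdf ▸ (hω ▸ orderOf_pos ω).ne'⟩
  obtain ⟨n, -, rfl⟩ := hprim.eq_pow_of_pow_eq_one (ZMod.pow_card_sub_one_eq_one hy)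
  exact ⟨n % d, Nat.mod_lt n hd, (mem_iff hω).2 ⟨n / d, by rw [Nat.div_add_mod]⟩⟩

theorem sum_erase_zero [Fact p.Prime] {M : Type*} [AddCommMonoid M] (hω : orderOf ω = d * f)
    (hdf : d * f = p - 1) (g : ZMod p → M) :
    ∑ y ∈ univ.erase 0, g y = ∑ j ∈ range d, ∑ y ∈ cyclotomicClass p d f ω j, g y := by
  rw [← sum_biUnion]
  · congr 1
    ext y
    simp only [mem_erase, mem_univ, and_true, mem_biUnion, mem_range]
    exact ⟨fun hy => exists_mem hω hdf hy, fun ⟨j, _, hy⟩ => ne_zero hy⟩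
  · intro i hi j hj hij
    exact disjoint_left.2 fun y hyi hyj =>
      hij (eq_of_mem_of_mem hω (mem_range.1 hi) (mem_range.1 hj) hyi hyj)

theorem neg_one_mem_theta [Fact p.Prime] (hω : orderOf ω = d * f) (hev : Even (d * f)) :
    (-1 : ZMod p) ∈ cyclotomicClass p d f ω (theta d f) := by
  obtain ⟨m, hm⟩ := hev
  have hprim : IsPrimitiveRoot ((ω : ZMod p) ^ m) 2 :=
    (IsPrimitiveRoot.coe_units_iff.2 (hω ▸ IsPrimitiveRoot.orderOf ω)).pow
      (hω ▸ orderOf_pos ω) (by omega)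
  rw [← hprim.eq_neg_one_of_two_right, mem_iff hω]
  unfold theta
  split_ifs with hf
  · obtain ⟨n, rfl⟩ := hf
    exact ⟨n, by congr 1; linarith⟩
  · obtain ⟨n, rfl⟩ := Nat.not_even_iff_odd.1 hf
    obtain ⟨e, rfl⟩ : Even d :=
      (Nat.even_mul.1 ⟨m, hm⟩).resolve_right (Nat.not_even_iff_odd.2 (odd_two_mul_add_one n))
    refine ⟨n, congrArg _ ?_⟩
    rw [show (e + e) / 2 = e by omega]
    linarith

theorem neg_one_mem_iff [Fact p.Prime] (hω : orderOf ω = d * f) (hev : Even (d * f)) {j : ℕ}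
    (hj : j < d) : (-1 : ZMod p) ∈ cyclotomicClass p d f ω j ↔ j = theta d f :=
  ⟨fun h => eq_of_mem_of_mem hω hj (theta_lt f (by omega)) h (neg_one_mem_theta hω hev),
    fun h => h ▸ neg_one_mem_theta hω hev⟩

theorem cycNum_eq_card (hω : orderOf ω = d * f) (i j : ℕ) :
    cycNum p d f ω i j
      = #{x ∈ cyclotomicClass p d f ω i | 1 + x ∈ cyclotomicClass p d f ω j} := by
  let P : ℕ × ℕ → Prop := fun uv =>
    1 + (ω : ZMod p) ^ (d * uv.1 + i) = (ω : ZMod p) ^ (d * uv.2 + j)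
  have hcard : cycNum p d f ω i j = #{uv ∈ range f ×ˢ range f | P uv} := by
    rw [cycNum, ← Nat.card_eq_finsetCard]
    exact Nat.card_congr (Equiv.subtypeEquivRight fun uv => by simp [P, and_assoc])
  rw [hcard]
  refine card_nbij (fun uv => (ω : ZMod p) ^ (d * uv.1 + i)) ?_ ?_ ?_
  · intro uv huv
    simp only [mem_coe, mem_filter, mem_product, mem_range] at huv ⊢
    exact ⟨mem_image_of_mem _ (mem_range.2 huv.1.1),
      huv.2 ▸ mem_image_of_mem _ (mem_range.2 huv.1.2)⟩
  · intro uv huv uv' huv' h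
    simp only [mem_coe, mem_filter, mem_product, mem_range] at huv huv'
    have hu := injOn_pow hω i (mem_range.2 huv.1.1) (mem_range.2 huv'.1.1) h
    have hv := injOn_pow hω j (mem_range.2 huv.1.2) (mem_range.2 huv'.1.2)
      (huv.2.symm.trans (hu ▸ huv'.2))
    exact Prod.ext hu hv
  · intro x hx
    simp only [mem_coe, mem_filter] at hx
    obtain ⟨u, hu, rfl⟩ := mem_image.1 hx.1
    obtain ⟨v, hv, hv'⟩ := mem_image.1 hx.2
    exact ⟨(u, v), mem_filter.2 ⟨mem_product.2 ⟨hu, hv⟩, hv'.symm⟩, rfl⟩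

theorem apply_eq_of_mem {M : Type*} (hω : orderOf ω = d * f) {Φ : ZMod p → M}
    (hΦ : ∀ a ∈ cyclotomicClass p d f ω 0, ∀ x, Φ (x * a) = Φ x) {j : ℕ} {y : ZMod p}
    (hy : y ∈ cyclotomicClass p d f ω j) : Φ y = Φ ((ω : ZMod p) ^ j) := by
  obtain ⟨a, ha, rfl⟩ := exists_eq_pow_mul hω hy
  exact hΦ a ha _

theorem apply_eq_ite_add_sum [Fact p.Prime] {M : Type*} [AddCommMonoid M]
    (hω : orderOf ω = d * f) (hdf : d * f = p - 1) {Φ : ZMod p → M}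
    (hΦ : ∀ a ∈ cyclotomicClass p d f ω 0, ∀ x, Φ (x * a) = Φ x) (z : ZMod p) :
    Φ z = (if z = 0 then Φ 0 else 0)
      + ∑ j ∈ range d, if z ∈ cyclotomicClass p d f ω j then Φ ((ω : ZMod p) ^ j) else 0 := by
  by_cases hz : z = 0
  · subst hz
    rw [if_pos rfl, sum_eq_zero fun j _ => if_neg fun h => ne_zero h rfl, add_zero]
  · obtain ⟨j₀, hj₀, hz₀⟩ := exists_mem hω hdf hz
    rw [if_neg hz, zero_add, sum_eq_single_of_mem j₀ (mem_range.2 hj₀), if_pos hz₀,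
      apply_eq_of_mem hω hΦ hz₀]
    intro j hj hne
    exact if_neg fun h => hne (eq_of_mem_of_mem hω (mem_range.1 hj) hj₀ h hz₀)

theorem sum_one_add [Fact p.Prime] (hω : orderOf ω = d * f) (hdf : d * f = p - 1)
    (hev : Even (d * f)) {Φ : ZMod p → ℕ}
    (hΦ : ∀ a ∈ cyclotomicClass p d f ω 0, ∀ x, Φ (x * a) = Φ x) {i : ℕ} (hi : i < d) :
    ∑ y ∈ cyclotomicClass p d f ω i, Φ (1 + y)
      = (if i = theta d f then Φ 0 else 0)
        + ∑ j ∈ range d, cycNum p d f ω i j * Φ ((ω : ZMod p) ^ j) := by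
  rw [sum_congr rfl fun y _ => apply_eq_ite_add_sum hω hdf hΦ (1 + y), sum_add_distrib,
    sum_comm]
  congr 1
  · rw [← sum_filter, sum_const, smul_eq_mul]
    have hfilter : {y ∈ cyclotomicClass p d f ω i | 1 + y = 0}
        = {y ∈ cyclotomicClass p d f ω i | y = -1} := by
      simp only [add_eq_zero_iff_eq_neg']
    rw [hfilter, filter_eq']
    simp only [neg_one_mem_iff hω hev hi]
    split_ifs <;> simp
  · refine sum_congr rfl fun j _ => ?_
    rw [← sum_filter, sum_const, smul_eq_mul, cycNum_eq_card hω]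

end cyclotomicClass

section zeroSumCount

variable {p d f : ℕ} [Fact p.Prime] {ω : (ZMod p)ˣ}

open cyclotomicClass

theorem zeroSumCount_mul (hω : orderOf ω = d * f) (k : ℕ) :
    ∀ a ∈ cyclotomicClass p d f ω 0, ∀ x, zeroSumCount (cyclotomicClass p d f ω 0) k (x * a)
      = zeroSumCount (cyclotomicClass p d f ω 0) k x := by
  induction k with
  | zero => intro a ha x; simp [zeroSumCount, ne_zero ha]
  | succ k ih =>
    intro a ha x
    rw [zeroSumCount, zeroSumCount, ← cyclotomicClass.sum_mul hω ha]
    simp only [← add_mul, ih a ha]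

theorem zeroSumCount_succ_pow (hω : orderOf ω = d * f) (k i : ℕ) :
    zeroSumCount (cyclotomicClass p d f ω 0) (k + 1) ((ω : ZMod p) ^ i)
      = ∑ y ∈ cyclotomicClass p d f ω i, zeroSumCount (cyclotomicClass p d f ω 0) k (1 + y) := by
  rw [zeroSumCount, ← sum_inv hω, ← sum_pow_mul hω i]
  refine sum_congr rfl fun t ht => ?_
  rw [← zeroSumCount_mul hω k t ht]
  congr 1
  field_simp [ne_zero ht]
  ring

theorem zeroSumCount_succ_zero (hω : orderOf ω = d * f) (k : ℕ) :
    zeroSumCount (cyclotomicClass p d f ω 0) (k + 1) 0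
      = f * zeroSumCount (cyclotomicClass p d f ω 0) k ((ω : ZMod p) ^ 0) := by
  rw [zeroSumCount, sum_congr rfl fun t ht => ?_, sum_const, card_eq hω, smul_eq_mul]
  rw [zero_add, pow_zero, ← one_mul t, zeroSumCount_mul hω k t ht]

theorem zeroSumCount_succ_pow_eq (hω : orderOf ω = d * f) (hdf : d * f = p - 1)
    (hev : Even (d * f)) (k : ℕ) {i : ℕ} (hi : i < d) :
    zeroSumCount (cyclotomicClass p d f ω 0) (k + 1) ((ω : ZMod p) ^ i)
      = (if i = theta d f then zeroSumCount (cyclotomicClass p d f ω 0) k 0 else 0)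
        + ∑ j ∈ range d,
            cycNum p d f ω i j * zeroSumCount (cyclotomicClass p d f ω 0) k ((ω : ZMod p) ^ j) :=
  (zeroSumCount_succ_pow hω k i).trans (sum_one_add hω hdf hev (zeroSumCount_mul hω k) hi)

theorem zeroSumCount_one_pow (hω : orderOf ω = d * f) (hdf : d * f = p - 1)
    (hev : Even (d * f)) {i : ℕ} (hi : i < d) :
    zeroSumCount (cyclotomicClass p d f ω 0) 1 ((ω : ZMod p) ^ i)
      = if i = theta d f then 1 else 0 := by
  rw [zeroSumCount_succ_pow_eq hω hdf hev 0 hi]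
  simp [zeroSumCount, ω.ne_zero]

theorem zeroSumCount_two_pow (hω : orderOf ω = d * f) (hdf : d * f = p - 1)
    (hev : Even (d * f)) {i : ℕ} (hi : i < d) :
    zeroSumCount (cyclotomicClass p d f ω 0) 2 ((ω : ZMod p) ^ i)
      = cycNum p d f ω i (theta d f) := by
  have hd : 0 < d := by omega
  rw [zeroSumCount_succ_pow_eq hω hdf hev 1 hi, zeroSumCount_succ_zero hω,
    sum_congr rfl fun j hj => by rw [zeroSumCount_one_pow hω hdf hev (mem_range.1 hj)]]
  simp [zeroSumCount, mem_range.2 (theta_lt f hd)]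

theorem zeroSumCount_three_pow (hω : orderOf ω = d * f) (hdf : d * f = p - 1)
    (hev : Even (d * f)) {i : ℕ} (hi : i < d) :
    zeroSumCount (cyclotomicClass p d f ω 0) 3 ((ω : ZMod p) ^ i)
      = (if i = theta d f then f * (if theta d f = 0 then 1 else 0) else 0)
        + ∑ j ∈ range d, cycNum p d f ω i j * cycNum p d f ω j (theta d f) := by
  rw [zeroSumCount_succ_pow_eq hω hdf hev 2 hi, zeroSumCount_succ_zero hω,
    zeroSumCount_one_pow hω hdf hev (by omega),
    sum_congr rfl fun j hj => by rw [zeroSumCount_two_pow hω hdf hev (mem_range.1 hj)]]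
  simp only [eq_comm (a := 0)]

theorem zeroSumCount_four_pow (hω : orderOf ω = d * f) (hdf : d * f = p - 1)
    (hev : Even (d * f)) {ν : ℕ} (hν : ν < d) :
    zeroSumCount (cyclotomicClass p d f ω 0) 4 ((ω : ZMod p) ^ ν)
      = ∑ i ∈ range d, ∑ j ∈ range d,
          cycNum p d f ω ν i * cycNum p d f ω i j * cycNum p d f ω j (theta d f)
        + f * (if theta d f = 0 then 1 else 0)
          * zeroSumCount (cyclotomicClass p d f ω 0) 2 ((ω : ZMod p) ^ ν)
        + f * cycNum p d f ω 0 (theta d f)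
          * zeroSumCount (cyclotomicClass p d f ω 0) 1 ((ω : ZMod p) ^ ν) := by
  have hd : 0 < d := by omega
  rw [zeroSumCount_succ_pow_eq hω hdf hev 3 hν, zeroSumCount_succ_zero hω,
    zeroSumCount_two_pow hω hdf hev hd, zeroSumCount_two_pow hω hdf hev hν,
    zeroSumCount_one_pow hω hdf hev hν,
    sum_congr rfl fun i hi => by rw [zeroSumCount_three_pow hω hdf hev (mem_range.1 hi)]]
  simp only [mul_add, sum_add_distrib, mul_ite, mul_zero, sum_ite_eq',
    mem_range.2 (theta_lt f hd), if_true, mul_sum, mul_assoc]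
  split_ifs <;> ring

end zeroSumCount

section gaussPeriod

variable {p d f : ℕ} [Fact p.Prime] {ω : (ZMod p)ˣ} {ζ : ℂ}

open cyclotomicClass

theorem gaussPeriod_eq_sum (hω : orderOf ω = d * f) (hζ : ζ ^ p = 1) (i : ℕ) :
    gaussPeriod p d f ω ζ i = ∑ y ∈ cyclotomicClass p d f ω i, AddChar.zmodChar p hζ y := by
  rw [sum_eq hω]
  rfl

theorem sum_mul_eq_gaussPeriod (hω : orderOf ω = d * f) (hζ : ζ ^ p = 1) {j : ℕ}
    {y : ZMod p} (hy : y ∈ cyclotomicClass p d f ω j) :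
    ∑ t ∈ cyclotomicClass p d f ω 0, AddChar.zmodChar p hζ (y * t)
      = gaussPeriod p d f ω ζ j := by
  obtain ⟨a, ha, rfl⟩ := exists_eq_pow_mul hω hy
  rw [gaussPeriod_eq_sum hω hζ, ← sum_pow_mul hω j,
    ← cyclotomicClass.sum_mul hω ha fun t => AddChar.zmodChar p hζ ((ω : ZMod p) ^ j * t)]
  exact sum_congr rfl fun t _ => by rw [mul_assoc, mul_comm a]

theorem sum_mul_pow_eq_gaussPeriod (hω : orderOf ω = d * f) (hζ : ζ ^ p = 1) (j ν : ℕ) :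
    ∑ y ∈ cyclotomicClass p d f ω j, AddChar.zmodChar p hζ (y * (ω : ZMod p) ^ ν)
      = gaussPeriod p d f ω ζ (j + ν) := by
  rw [gaussPeriod_eq_sum hω hζ, sum_eq hω, sum_eq hω]
  simp only [← pow_add, add_assoc]

theorem nInt_add_pow (hω : orderOf ω = d * f) (hdf : d * f = p - 1) (hζ : IsPrimitiveRoot ζ p)
    (k ν : ℕ) :
    nInt p d f ω ζ k ν + f ^ k
      = p * zeroSumCount (cyclotomicClass p d f ω 0) k ((ω : ZMod p) ^ ν) := by
  have hψ := AddChar.zmodChar_primitive_of_primitive_root p hζ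
  have h := card_mul_zeroSumCount hψ (cyclotomicClass p d f ω 0) k ((ω : ZMod p) ^ ν)
  rw [ZMod.card] at h
  rw [h, ← add_sum_erase _ _ (mem_univ 0), sum_erase_zero hω hdf]
  simp only [zero_mul, AddChar.map_zero_eq_one, sum_const, card_eq hω, nsmul_eq_mul, mul_one]
  rw [add_comm, nInt]
  congr 1
  refine sum_congr rfl fun j _ => ?_
  rw [sum_congr rfl fun y hy => by rw [sum_mul_eq_gaussPeriod hω _ hy], ← mul_sum,
    sum_mul_pow_eq_gaussPeriod hω]

end gaussPeriod

theorem nInt_four_general (p d f : ℕ) (hp : p.Prime) (hodd : Odd p)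
    (hdvd : d ∣ p - 1) (hf : f = (p - 1) / d)
    (ω : (ZMod p)ˣ) (hω : ∀ x : (ZMod p)ˣ, ∃ n : ℕ, ω ^ n = x)
    (ζ : ℂ) (hζ : IsPrimitiveRoot ζ p)
    (ν : ℕ) (hν : ν < d) :
    nInt p d f ω ζ 4 ν + (f : ℂ) ^ 4
      = (p : ℂ) * ∑ i ∈ Finset.range d, ∑ j ∈ Finset.range d,
          (cycNum p d f ω ν i : ℂ) * (cycNum p d f ω i j : ℂ)
            * (cycNum p d f ω j (theta d f) : ℂ)
        + (f : ℂ) * (if theta d f = 0 then 1 else 0) * (nInt p d f ω ζ 2 ν + (f : ℂ) ^ 2)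
        + (f : ℂ) * (cycNum p d f ω 0 (theta d f) : ℂ) * (nInt p d f ω ζ 1 ν + (f : ℂ)) := by
  have : Fact p.Prime := ⟨hp⟩
  have hdf : d * f = p - 1 := hf ▸ Nat.mul_div_cancel' hdvd
  have hord : orderOf ω = d * f := by
    rw [hdf, orderOf_eq_card_of_forall_mem_zpowers fun x => ?_, Nat.card_eq_fintype_card,
      ZMod.card_units]
    obtain ⟨n, rfl⟩ := hω x
    exact Subgroup.npow_mem_zpowers ω n
  have hev : Even (d * f) := hdf ▸ Nat.Odd.sub_odd hodd odd_one
  have h4 := congrArg (Nat.cast : ℕ → ℂ) (zeroSumCount_four_pow hord hdf hev hν)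
  push_cast at h4
  linear_combination nInt_add_pow hord hdf hζ 4 ν + (p : ℂ) * h4
    - (f : ℂ) * (if theta d f = 0 then 1 else 0) * nInt_add_pow hord hdf hζ 2 ν
    - (f : ℂ) * (cycNum p d f ω 0 (theta d f) : ℂ) * nInt_add_pow hord hdf hζ 1 ν

/-- Lemma 2, case k = 4:
`n(4,ν) + f⁴ = p·Σ_{i,j}(ν,i)(i,j)(j,θ) + f·δ_{θ0}·[n(2,ν)+f²] + f·(0,θ)·[n(1,ν)+f]`. -/
theorem nInt_four (p d f : ℕ) (hp : p.Prime) (hodd : Odd p)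
    (hd : 2 ≤ d) (hdvd : d ∣ p - 1) (hf : f = (p - 1) / d)
    (ω : (ZMod p)ˣ) (hω : ∀ x : (ZMod p)ˣ, ∃ n : ℕ, ω ^ n = x)
    (ζ : ℂ) (hζ : IsPrimitiveRoot ζ p)
    (ν : ℕ) (hν : ν < d) :
    nInt p d f ω ζ 4 ν + (f : ℂ) ^ 4
      = (p : ℂ) * ∑ i ∈ Finset.range d, ∑ j ∈ Finset.range d,
          (cycNum p d f ω ν i : ℂ) * (cycNum p d f ω i j : ℂ)
            * (cycNum p d f ω j (theta d f) : ℂ)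
        + (f : ℂ) * (if theta d f = 0 then 1 else 0) * (nInt p d f ω ζ 2 ν + (f : ℂ) ^ 2)
        + (f : ℂ) * (cycNum p d f ω 0 (theta d f) : ℂ) * (nInt p d f ω ζ 1 ν + (f : ℂ)) :=
  nInt_four_general p d f hp hodd hdvd hf ω hω ζ hζ ν hν
end

section
/- (Theorem 1) Let p be an odd prime, d ≥ 2 with d ∣ p−1, f = (p−1)/d. Let a ∈ 𝔽_p^* be a non-d-th-power, with α ≡ ind_ω(a) mod d. Then s_d(p,a) = 2 if (α+θ, θ) ≠ 0, and otherwise s_d(p,a) = min{ s ≥ 3 : there exist 0 ≤ i_2,…,i_{s−1} ≤ d−1 with (α+θ, i_2)·(i_2, i_3)⋯(i_{s−1}, θ) ≠ 0 }. -/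
open Finset

/-! Write `C_i` for the coset of `ω ^ i` in `𝔽_p^* / (𝔽_p^*)^d`, so that `(i,j) ≠ 0` says that
`1 + x = y` for some `x ∈ C_i`, `y ∈ C_j`; scaling by a `d`-th power, every `t ∈ C_i` then has
`t + h ∈ C_j` for some nonzero `d`-th power `h`. If `a = h₁ + ⋯ + h_s`, the partial sums
`-a + h₁ + ⋯ + h_k` are such steps, starting from the class of `-a`, which is `C_{α+θ}`, and
ending in the class of `-1`, which is `C_θ`, once the remainder is a single `d`-th power; conversely
every walk of `n` steps from `C_{α+θ}` to `C_θ` writes `a` as a sum of `n + 1` powers. A walk of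
`s - 1` steps is a nonzero chain `(α+θ,i₂)⋯(i_{s-1},θ)`, and none of length `0` exists because `a`
is not a `d`-th power. -/

theorem Nat.sInf_setOf_eq_of_exists_le {P Q : ℕ → Prop} (hQP : ∀ n, Q n → P n)
    (hPQ : ∀ n, P n → ∃ m ≤ n, Q m) : sInf {n | P n} = sInf {n | Q n} := by
  rcases Set.eq_empty_or_nonempty {n | Q n} with hQ | ⟨m, hm⟩
  · have hP : {n | P n} = ∅ := Set.eq_empty_of_forall_notMem fun n hn => by
      obtain ⟨m, -, hm⟩ := hPQ n hn
      exact hQ.subset hm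
    rw [hP, hQ]
  · apply le_antisymm
    · exact Nat.sInf_le (hQP _ (Nat.sInf_mem ⟨m, hm⟩))
    · obtain ⟨k, hk, hQk⟩ := hPQ _ (Nat.sInf_mem ⟨m, hQP m hm⟩)
      exact (Nat.sInf_le hQk).trans hk

theorem exists_div_two_eq_mul_add_theta {p d f : ℕ} (hodd : Odd p) (hdf : d * f = p - 1) :
    ∃ k, p / 2 = d * k + theta d f := by
  obtain ⟨r, rfl⟩ := hodd
  rcases Nat.even_or_odd f with ⟨t, rfl⟩ | ⟨t, rfl⟩
  · refine ⟨t, ?_⟩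
    rw [theta, if_pos ⟨t, rfl⟩]
    have : d * (t + t) = 2 * (d * t) := by ring
    omega
  · have hd : Even d := (Nat.even_mul.1 (hdf ▸ ⟨r, by omega⟩)).resolve_right
      (Nat.not_even_iff_odd.2 ⟨t, rfl⟩)
    obtain ⟨e, rfl⟩ := hd
    refine ⟨t, ?_⟩
    rw [theta, if_neg (Nat.not_even_iff_odd.2 ⟨t, rfl⟩)]
    have : (e + e) * (2 * t + 1) = 2 * ((e + e) * t + e) := by ring
    omega

theorem ZMod.neg_one_eq_pow_div_two {p : ℕ} [Fact p.Prime] (hp2 : p ≠ 2) {ω : (ZMod p)ˣ}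
    (hω : ∀ x : (ZMod p)ˣ, ∃ n : ℕ, ω ^ n = x) : -1 = ω ^ (p / 2) := by
  have horder : orderOf ω = p - 1 := by
    rw [orderOf_eq_card_of_forall_mem_zpowers fun x => ?_, Nat.card_eq_fintype_card,
      ZMod.card_units]
    obtain ⟨n, rfl⟩ := hω x
    exact Subgroup.npow_mem_zpowers ω n
  rcases ZMod.pow_div_two_eq_neg_one_or_one p ω.ne_zero with h | h
  · have hp := (Fact.out : p.Prime).two_le
    have hdvd := horder ▸ orderOf_dvd_of_pow_eq_one (Units.ext (by simpa using h))
    have := Nat.le_of_dvd (by omega) hdvd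
    omega
  · exact Units.ext (by simpa using h.symm)

abbrev PowClass (K : Type*) [Field K] (d : ℕ) : Type _ := Kˣ ⧸ (powMonoidHom d : Kˣ →* Kˣ).range

namespace PowClass

variable {K : Type*} [Field K] {d : ℕ}

def Step (A B : PowClass K d) : Prop :=
  ∃ x y : Kˣ, (x : PowClass K d) = A ∧ (y : PowClass K d) = B ∧ 1 + (x : K) = y

def Walk : ℕ → PowClass K d → PowClass K d → Prop
  | 0, A, B => A = B
  | n + 1, A, B => ∃ C, Step A C ∧ Walk n C B

theorem mk_eq_mk_iff {x y : Kˣ} : (x : PowClass K d) = y ↔ ∃ g : Kˣ, y = x * g ^ d := by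
  rw [QuotientGroup.eq, MonoidHom.mem_range]
  simp only [powMonoidHom_apply, eq_comm (b := x⁻¹ * y), inv_mul_eq_iff_eq_mul]

@[simp]
theorem mk_pow (g : Kˣ) : ((g ^ d : Kˣ) : PowClass K d) = 1 :=
  (QuotientGroup.eq_one_iff _).2 ⟨g, rfl⟩

theorem step_mk_of_add_pow_eq {t w g : Kˣ} (h : (t : K) + (g : K) ^ d = w) :
    Step (t : PowClass K d) w := by
  refine ⟨t * (g ^ d)⁻¹, w * (g ^ d)⁻¹, by simp, by simp, ?_⟩
  push_cast
  field_simp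
  linear_combination h

theorem exists_add_pow_eq_of_step {t : Kˣ} {C : PowClass K d} (h : Step (t : PowClass K d) C) :
    ∃ g w : Kˣ, (w : PowClass K d) = C ∧ (t : K) + (g : K) ^ d = w := by
  obtain ⟨x, y, hx, rfl, hxy⟩ := h
  obtain ⟨g, rfl⟩ := mk_eq_mk_iff.1 hx
  refine ⟨g, y * g ^ d, by simp, ?_⟩
  push_cast
  rw [← hxy]
  ring

theorem exists_add_sum_pow_eq_of_walk {n : ℕ} {t : Kˣ} {B : PowClass K d}
    (h : Walk n (t : PowClass K d) B) :
    ∃ (g : Fin n → Kˣ) (w : Kˣ), (w : PowClass K d) = B ∧ (t : K) + ∑ i, (g i : K) ^ d = w := by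
  induction n generalizing t with
  | zero => exact ⟨finZeroElim, t, h, by simp⟩
  | succ n ih =>
    obtain ⟨C, hstep, hwalk⟩ := h
    obtain ⟨g₀, w₀, rfl, hw₀⟩ := exists_add_pow_eq_of_step hstep
    obtain ⟨g, w, hw, hsum⟩ := ih hwalk
    refine ⟨Fin.cons g₀ g, w, hw, ?_⟩
    rw [Fin.sum_univ_succ, ← hsum, ← hw₀]
    simp only [Fin.cons_zero, Fin.cons_succ]
    ring

theorem exists_sum_pow_eq_of_walk_neg {n : ℕ} {a : Kˣ}
    (h : Walk n ((-a : Kˣ) : PowClass K d) ((-1 : Kˣ) : PowClass K d)) :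
    ∃ u : Fin (n + 1) → Kˣ, (a : K) = ∑ i, (u i : K) ^ d := by
  obtain ⟨g, w, hw, hsum⟩ := exists_add_sum_pow_eq_of_walk h
  obtain ⟨c, rfl⟩ := mk_eq_mk_iff.1 hw.symm
  refine ⟨Fin.cons c g, ?_⟩
  rw [Fin.sum_univ_succ]
  simp only [Fin.cons_zero, Fin.cons_succ]
  push_cast at hsum
  linear_combination -hsum

theorem exists_walk_neg_of_sum_pow_eq {s : ℕ} {a : Kˣ} {u : Fin s → Kˣ}
    (h : (a : K) = ∑ i, (u i : K) ^ d) :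
    ∃ n < s, Walk n ((-a : Kˣ) : PowClass K d) ((-1 : Kˣ) : PowClass K d) := by
  induction s generalizing a with
  | zero =>
    simp only [Finset.univ_eq_empty, Finset.sum_empty] at h
    exact absurd h a.ne_zero
  | succ s ih =>
    rw [Fin.sum_univ_succ] at h
    set b := ∑ i : Fin s, (u i.succ : K) ^ d
    by_cases hb0 : b = 0
    · refine ⟨0, s.succ_pos, (mk_eq_mk_iff.2 ⟨u 0, Units.ext ?_⟩).symm⟩
      push_cast
      rw [h, hb0, add_zero]
      ring
    · obtain ⟨n, hn, hwalk⟩ := ih (a := Units.mk0 b hb0) (u := fun i => u i.succ) rfl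
      refine ⟨n + 1, by omega, _, step_mk_of_add_pow_eq (g := u 0) ?_, hwalk⟩
      push_cast
      rw [h, Units.val_mk0]
      ring
theorem sInf_sum_pow_eq_sInf_walk (a : Kˣ) :
    sInf {k | 1 ≤ k ∧ ∃ u : Fin k → Kˣ, (a : K) = ∑ i, (u i : K) ^ d}
      = sInf {k | 1 ≤ k ∧ Walk (k - 1) ((-a : Kˣ) : PowClass K d) ((-1 : Kˣ) : PowClass K d)} := by
  refine Nat.sInf_setOf_eq_of_exists_le (fun k ⟨hk, hwalk⟩ => ⟨hk, ?_⟩) fun k ⟨_, u, hu⟩ => ?_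
  · obtain ⟨n, rfl⟩ : ∃ n, k = n + 1 := ⟨k - 1, by omega⟩
    exact exists_sum_pow_eq_of_walk_neg hwalk
  · obtain ⟨n, hn, hwalk⟩ := exists_walk_neg_of_sum_pow_eq hu
    exact ⟨n + 1, hn, n.succ_pos, hwalk⟩

section Cyclotomic

variable {p : ℕ} [Fact p.Prime] {ω : (ZMod p)ˣ}

def cycClass (d : ℕ) (ω : (ZMod p)ˣ) (i : ℕ) : PowClass (ZMod p) d :=
  ((ω ^ i : (ZMod p)ˣ) : PowClass (ZMod p) d)

theorem cycClass_add (i j : ℕ) : cycClass d ω (i + j) = cycClass d ω i * cycClass d ω j := by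
  rw [cycClass, pow_add, QuotientGroup.mk_mul]
  rfl

theorem cycClass_mul_add (u i : ℕ) : cycClass d ω (d * u + i) = cycClass d ω i := by
  rw [cycClass_add, cycClass, pow_mul', mk_pow, one_mul]

theorem exists_cycClass_eq (hω : ∀ x : (ZMod p)ˣ, ∃ n : ℕ, ω ^ n = x) (hd : 0 < d)
    (C : PowClass (ZMod p) d) : ∃ j : Fin d, cycClass d ω j = C := by
  obtain ⟨x, rfl⟩ := QuotientGroup.mk_surjective C
  obtain ⟨n, rfl⟩ := hω x
  exact ⟨⟨n % d, Nat.mod_lt n hd⟩, by rw [← cycClass_mul_add (n / d), Nat.div_add_mod]; rfl⟩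

variable {f : ℕ}

theorem mk_eq_cycClass_iff (hω : ∀ x : (ZMod p)ˣ, ∃ n : ℕ, ω ^ n = x) (hdf : d * f = p - 1)
    (hf : 0 < f) {x : (ZMod p)ˣ} {i : ℕ} :
    (x : PowClass (ZMod p) d) = cycClass d ω i ↔ ∃ u < f, x = ω ^ (d * u + i) := by
  refine ⟨fun h => ?_, fun ⟨u, _, hu⟩ => hu ▸ cycClass_mul_add u i⟩
  obtain ⟨g, rfl⟩ := mk_eq_mk_iff.1 h.symm
  obtain ⟨n, rfl⟩ := hω g
  have hfermat : ω ^ (d * f) = 1 := hdf ▸ ZMod.units_pow_card_sub_one_eq_one p ω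
  refine ⟨n % f, Nat.mod_lt n hf, ?_⟩
  calc ω ^ i * (ω ^ n) ^ d = (ω ^ (d * f)) ^ (n / f) * ω ^ (d * (n % f) + i) := by
        rw [← pow_mul, ← pow_mul, ← pow_add, ← pow_add]
        congr 1
        conv_lhs => rw [← Nat.div_add_mod n f]
        ring
    _ = ω ^ (d * (n % f) + i) := by rw [hfermat, one_pow, one_mul]

theorem cycNum_ne_zero_iff (hω : ∀ x : (ZMod p)ˣ, ∃ n : ℕ, ω ^ n = x) (hdf : d * f = p - 1)
    (hf : 0 < f) (i j : ℕ) :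
    cycNum p d f ω i j ≠ 0 ↔ Step (cycClass d ω i) (cycClass d ω j) := by
  have : Finite {uv : ℕ × ℕ // uv.1 < f ∧ uv.2 < f ∧
      (1 : ZMod p) + (ω : ZMod p) ^ (d * uv.1 + i) = (ω : ZMod p) ^ (d * uv.2 + j)} :=
    ((Set.finite_Iio f).prod (Set.finite_Iio f)).subset (fun _ h => ⟨h.1, h.2.1⟩) |>.to_subtype
  rw [cycNum, Nat.card_ne_zero, and_iff_left this, nonempty_subtype]
  simp only [Step, mk_eq_cycClass_iff hω hdf hf]
  constructor
  · rintro ⟨⟨u, v⟩, hu, hv, h⟩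
    exact ⟨_, _, ⟨u, hu, rfl⟩, ⟨v, hv, rfl⟩, by push_cast; exact h⟩
  · rintro ⟨_, _, ⟨u, hu, rfl⟩, ⟨v, hv, rfl⟩, h⟩
    exact ⟨(u, v), hu, hv, by push_cast at h; exact h⟩

theorem walk_succ_cycClass_iff (hω : ∀ x : (ZMod p)ˣ, ∃ n : ℕ, ω ^ n = x)
    (hdf : d * f = p - 1) (hd : 0 < d) (hf : 0 < f) (m a b : ℕ) :
    Walk (m + 1) (cycClass d ω a) (cycClass d ω b) ↔
      ∃ v : Fin m → Fin d, chainProd (cycNum p d f ω) a b (List.ofFn fun i => (v i : ℕ)) ≠ 0 := by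
  induction m generalizing a with
  | zero =>
    simp only [Walk, exists_eq_right, Fin.exists_fin_zero_pi, List.ofFn_zero, chainProd,
      cycNum_ne_zero_iff hω hdf hf]
  | succ m ih =>
    simp only [Walk, Fin.exists_fin_succ_pi, List.ofFn_succ, Fin.cons_zero, Fin.cons_succ,
      chainProd, mul_ne_zero_iff, cycNum_ne_zero_iff hω hdf hf] at ih ⊢
    constructor
    · rintro ⟨C, hstep, hwalk⟩
      obtain ⟨j, rfl⟩ := exists_cycClass_eq hω hd C
      obtain ⟨v, hv⟩ := (ih j).1 hwalk
      exact ⟨j, v, hstep, hv⟩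
    · rintro ⟨j, v, hstep, hv⟩
      exact ⟨_, hstep, (ih j).2 ⟨v, hv⟩⟩

theorem mk_neg_one_eq_cycClass_theta (hodd : Odd p) (hdf : d * f = p - 1)
    (hω : ∀ x : (ZMod p)ˣ, ∃ n : ℕ, ω ^ n = x) :
    ((-1 : (ZMod p)ˣ) : PowClass (ZMod p) d) = cycClass d ω (theta d f) := by
  obtain ⟨k, hk⟩ := exists_div_two_eq_mul_add_theta hodd hdf
  rw [ZMod.neg_one_eq_pow_div_two (by rintro rfl; norm_num at hodd) hω, ← cycClass_mul_add k, ← hk]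
  rfl

end Cyclotomic

end PowClass

open PowClass in
theorem sWaring_eq_sInf_chainProd {p d f : ℕ} [Fact p.Prime] (hodd : Odd p)
    (hdf : d * f = p - 1) {ω : (ZMod p)ˣ} (hω : ∀ x : (ZMod p)ˣ, ∃ n : ℕ, ω ^ n = x)
    {a : (ZMod p)ˣ} (ha : ¬ ∃ b : (ZMod p)ˣ, ((b : ZMod p)) ^ d = (a : ZMod p))
    {α : ℕ} (hα : ∃ m : ℕ, (a : ZMod p) = (ω : ZMod p) ^ (α + d * m)) :
    sWaring p d (a : ZMod p)
      = sInf {s | 2 ≤ s ∧ ∃ v : Fin (s - 2) → Fin d,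
          chainProd (cycNum p d f ω) (α + theta d f) (theta d f)
            (List.ofFn fun i => ((v i : ℕ))) ≠ 0} := by
  obtain ⟨hd, hf⟩ : 0 < d ∧ 0 < f :=
    CanonicallyOrderedAdd.mul_pos.1 (hdf ▸ Nat.sub_pos_of_lt (Fact.out : p.Prime).one_lt)
  have hneg_one := mk_neg_one_eq_cycClass_theta (ω := ω) hodd hdf hω
  have ha_class : (a : PowClass (ZMod p) d) = cycClass d ω α := by
    obtain ⟨m, hm⟩ := hα
    rw [show a = ω ^ (d * m + α) from Units.ext (by rw [hm]; push_cast; ring)]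
    exact cycClass_mul_add m α
  have hneg_a : ((-a : (ZMod p)ˣ) : PowClass (ZMod p) d) = cycClass d ω (α + theta d f) := by
    rw [← neg_one_mul, QuotientGroup.mk_mul, hneg_one, ha_class, add_comm, cycClass_add]
  have hno_walk : ¬ Walk 0 (cycClass d ω (α + theta d f)) (cycClass d ω (theta d f)) := by
    intro h
    rw [Walk, cycClass_add, mul_eq_right, ← ha_class, QuotientGroup.eq_one_iff] at h
    obtain ⟨b, hb⟩ := h
    exact ha ⟨b, by rw [← hb]; rfl⟩
  rw [sWaring, sInf_sum_pow_eq_sInf_walk, hneg_a, hneg_one]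
  congr 1
  ext s
  rcases s with _ | _ | m
  · simp
  · simpa using hno_walk
  · simp [← walk_succ_cycClass_iff hω hdf hd hf]

theorem sWaring_eq_cyclotomic_general (p d f : ℕ) (hp : p.Prime) (hodd : Odd p)
    (hdvd : d ∣ p - 1) (hf : f = (p - 1) / d)
    (ω : (ZMod p)ˣ) (hω : ∀ x : (ZMod p)ˣ, ∃ n : ℕ, ω ^ n = x)
    (a : (ZMod p)ˣ) (ha : ¬ ∃ b : (ZMod p)ˣ, ((b : ZMod p)) ^ d = (a : ZMod p))
    (α : ℕ) (hα : ∃ m : ℕ, (a : ZMod p) = (ω : ZMod p) ^ (α + d * m)) :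
    (cycNum p d f ω (α + theta d f) (theta d f) ≠ 0 → sWaring p d (a : ZMod p) = 2) ∧
    (cycNum p d f ω (α + theta d f) (theta d f) = 0 →
      sWaring p d (a : ZMod p)
        = sInf {s | 3 ≤ s ∧ ∃ v : Fin (s - 2) → Fin d,
            chainProd (cycNum p d f ω) (α + theta d f) (theta d f)
              (List.ofFn fun i => ((v i : ℕ))) ≠ 0}) := by
  have : Fact p.Prime := ⟨hp⟩
  rw [sWaring_eq_sInf_chainProd hodd (hf ▸ Nat.mul_div_cancel' hdvd) hω ha hα]
  set S := {s | 2 ≤ s ∧ ∃ v : Fin (s - 2) → Fin d,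
    chainProd (cycNum p d f ω) (α + theta d f) (theta d f) (List.ofFn fun i => ((v i : ℕ))) ≠ 0}
  have two_mem_iff : 2 ∈ S ↔ cycNum p d f ω (α + theta d f) (theta d f) ≠ 0 := by
    simp [S, chainProd]
  refine ⟨fun h => ?_, fun h => congrArg sInf (Set.ext fun s => ?_)⟩
  · have h2 := two_mem_iff.2 h
    exact le_antisymm (Nat.sInf_le h2) (le_csInf ⟨2, h2⟩ fun s hs => hs.1)
  · refine ⟨fun hs => ⟨?_, hs.2⟩, fun hs => ⟨Nat.le_of_succ_le hs.1, hs.2⟩⟩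
    rcases hs.1.eq_or_lt with rfl | hlt
    · exact absurd h (two_mem_iff.1 hs)
    · exact hlt

/-- Theorem 1: for a non-`d`-th-power `a` with `α ≡ ind_ω(a) mod d`,
`s_d(p,a) = 2` if `(α+θ,θ) ≠ 0`, and otherwise `s_d(p,a)` is the least `s ≥ 3` for which
some chain `(α+θ,i₂)(i₂,i₃)⋯(i_{s-1},θ)` of cyclotomic numbers is nonzero. -/
theorem sWaring_eq_cyclotomic (p d f : ℕ) (hp : p.Prime) (hodd : Odd p)
    (hd : 2 ≤ d) (hdvd : d ∣ p - 1) (hf : f = (p - 1) / d)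
    (ω : (ZMod p)ˣ) (hω : ∀ x : (ZMod p)ˣ, ∃ n : ℕ, ω ^ n = x)
    (a : (ZMod p)ˣ) (ha : ¬ ∃ b : (ZMod p)ˣ, ((b : ZMod p)) ^ d = (a : ZMod p))
    (α : ℕ) (hα : ∃ m : ℕ, (a : ZMod p) = (ω : ZMod p) ^ (α + d * m)) :
    (cycNum p d f ω (α + theta d f) (theta d f) ≠ 0 → sWaring p d (a : ZMod p) = 2) ∧
    (cycNum p d f ω (α + theta d f) (theta d f) = 0 →
      sWaring p d (a : ZMod p)
        = sInf {s | 3 ≤ s ∧ ∃ v : Fin (s - 2) → Fin d,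
            chainProd (cycNum p d f ω) (α + theta d f) (theta d f)
              (List.ofFn fun i => ((v i : ℕ))) ≠ 0}) :=
  sWaring_eq_cyclotomic_general p d f hp hodd hdvd hf ω hω a ha α hα
end
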